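/- Let E be a directed graph, 𝒟 its path category, and let (𝒞, 𝒟, ◁, ▷) be a length-preserving matched pair (length(c ◁ α) = length(α) for all composable pairs). Fix p ≥ 0. For q ≥ 0 let N_q be the free abelian group on the set of tuples (c; α₁, …, α_q), where c = (c₁, …, c_p) is a composable p-tuple of 𝒞-morphisms, (α₁, …, α_q) is a composable q-tuple of paths each of length ≥ 1, and source(c_p) = range(α₁). Define ∂_j : N_q → N_{q−1} on generators by: ∂₀(c; α₁, …, α_q) = (c ▷ α₁; α₂, …, α_q) (using the extended right action of paths on 𝒞-tuples); ∂_j(c; α₁, …, α_q) = (c; α₁, …, α_j ∘ α_{j+1}, …, α_q) for 1 ≤ j ≤ q−1; and ∂_q(c; α₁, …, α_q) = (c; α₁, …, α_{q−1}); and set d_q := Σ_{j=0}^{q} (−1)^j ∂_j. Define s_q : N_q → N_{q+1} on generators by s_q(c; α₁, …, α_q) = −Σ_{i=1}^{ℓ−1} (c ▷ α₁^{[0,i−1]}; α₁^i, α₁^{[i,ℓ]}, α₂, …, α_q), where ℓ = length(α₁) and α₁ = α₁^{[0,i−1]} ∘ α₁^i ∘ α₁^{[i,ℓ]} with α₁^{[0,i−1]}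 the first i−1 edges (at the range end), α₁^i the i-th edge, and α₁^{[i,ℓ]} the remaining ℓ−i edges (the sum is empty if ℓ = 1). Then for every q ≥ 2: d_{q+1} ∘ s_q + s_{q−1} ∘ d_q = id on N_q. -/

import Mathlib

/-! The homotopy `s` peels edges off the range end of `α₁`. Writing `α₁ = β ∘ e` with `e` an edge,
`s(c; α₁, …) = −(c; e, β, …) + s(c ▷ e; β, …)`, where the new generator `h = (c; e, β, …)` has
`∂₀ h = (c ▷ e; β, …)`, `∂₁ h = (c; α₁, …)`, and its higher faces `∂_{k+1} h` are exactly the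
terms by which `s ∂_k (c; α₁, …)` and `s ∂_k (c ▷ e; β, …)` differ; the `∂₀`-faces agree because
`▷` is an action, `(c ▷ e) ▷ β = c ▷ α₁`. So `ds + sd − id` takes the same value on both
generators, and induction on the length of `α₁` reduces the identity to a single edge `α₁ = e`:
there `s` kills every term except `s ∂₁ = −(c; e, α₂, …) + s ∂₀`.
-/

open CategoryTheory

universe v u

/-- A matched pair of small-category structures `C`, `D` on a common object type `V`.
A `C`-morphism `c : m ⟶ y` (source `m`, range `y`) and a `D`-morphism `d : z ⟶ m` determine
an object `w c d`, a `D`-morphism `c ◁ d : w c d ⟶ y` and a `C`-morphism `c ▷ d : z ⟶ w c d`.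
Morphism equations across different intermediate objects are expressed with `HEq`. -/
structure MatchedPair (V : Type u) (C : Category.{v} V) (D : Category.{v} V) where
  w : ∀ {z m y : V}, C.Hom m y → D.Hom z m → V
  la : ∀ {z m y : V} (c : C.Hom m y) (d : D.Hom z m), D.Hom (w c d) y
  ra : ∀ {z m y : V} (c : C.Hom m y) (d : D.Hom z m), C.Hom z (w c d)
  w_id_left : ∀ {z m : V} (d : D.Hom z m), w (C.id m) d = z
  la_id_left : ∀ {z m : V} (d : D.Hom z m), HEq (la (C.id m) d) d
  ra_id_left : ∀ {z m : V} (d : D.Hom z m), HEq (ra (C.id m) d) (C.id z)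
  w_id_right : ∀ {m y : V} (c : C.Hom m y), w c (D.id m) = y
  la_id_right : ∀ {m y : V} (c : C.Hom m y), HEq (la c (D.id m)) (D.id y)
  ra_id_right : ∀ {m y : V} (c : C.Hom m y), HEq (ra c (D.id m)) c
  w_comp_left : ∀ {z m k y : V} (c₁ : C.Hom k y) (c₂ : C.Hom m k) (d : D.Hom z m),
      w (C.comp c₂ c₁) d = w c₁ (la c₂ d)
  la_comp_left : ∀ {z m k y : V} (c₁ : C.Hom k y) (c₂ : C.Hom m k) (d : D.Hom z m),
      HEq (la (C.comp c₂ c₁) d) (la c₁ (la c₂ d))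
  ra_comp_left : ∀ {z m k y : V} (c₁ : C.Hom k y) (c₂ : C.Hom m k) (d : D.Hom z m),
      HEq (ra (C.comp c₂ c₁) d) (C.comp (ra c₂ d) (ra c₁ (la c₂ d)))
  w_comp_right : ∀ {z k m y : V} (c : C.Hom m y) (d₁ : D.Hom k m) (d₂ : D.Hom z k),
      w c (D.comp d₂ d₁) = w (ra c d₁) d₂
  la_comp_right : ∀ {z k m y : V} (c : C.Hom m y) (d₁ : D.Hom k m) (d₂ : D.Hom z k),
      HEq (la c (D.comp d₂ d₁)) (D.comp (la (ra c d₁) d₂) (la c d₁))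
  ra_comp_right : ∀ {z k m y : V} (c : C.Hom m y) (d₁ : D.Hom k m) (d₂ : D.Hom z k),
      HEq (ra c (D.comp d₂ d₁)) (ra (ra c d₁) d₂)

/-- The path category of a directed graph (quiver) `V`, as an explicit category structure
on the vertex type `V`: morphisms are finite paths, composed by concatenation. -/
@[reducible]
def pathsCat (V : Type u) [Quiver.{v + 1} V] : Category.{max u (v + 1)} V where
  Hom a b := Quiver.Path a b
  id a := Quiver.Path.nil
  comp f g := f.comp g
  id_comp f := Quiver.Path.nil_comp f
  comp_id f := Quiver.Path.comp_nil f
  assoc f g h := Quiver.Path.comp_assoc f g h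

/-- Composable tuples `(d₀, …, d_{k-1})` of `𝒟`-morphisms (`d₀` at the range end). -/
inductive DTup {V : Type u} (D : Category.{v} V) : ℕ → V → V → Type (max u v)
  | nil (x : V) : DTup D 0 x x
  | cons {k : ℕ} {z m y : V} (d : D.Hom m y) (rest : DTup D k z m) : DTup D (k + 1) z y

/-- Composable tuples `(c₀, …, c_{k-1})` of `𝒞`-morphisms (`c_{k-1}` at the source end). -/
inductive CTup {V : Type u} (C : Category.{v} V) : ℕ → V → V → Type (max u v)
  | nil (x : V) : CTup C 0 x x
  | snoc {k : ℕ} {z m y : V} (rest : CTup C k m y) (c : C.Hom z m) : CTup C (k + 1) z y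

namespace MatchedPair

variable {V : Type u} {C D : Category.{v} V}

/-- The extended right action `(c₀, …, c_k) ▷ d` of a `𝒟`-morphism on composable tuples of
`𝒞`-morphisms, together with its range object. -/
def raT (M : MatchedPair V C D) :
    ∀ {k : ℕ} {z m y : V}, CTup C k m y → D.Hom z m → Σ y' : V, CTup C k z y'
  | 0, z, _, _, CTup.nil _, _ => ⟨z, CTup.nil z⟩
  | _ + 1, _, _, _, CTup.snoc rest c, d =>
      ⟨(raT M rest (M.la c d)).1, CTup.snoc (raT M rest (M.la c d)).2 (M.ra c d)⟩

end MatchedPair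

namespace DTup

variable {V : Type u} {D : Category.{v} V}

/-- Split off the first (range-end) entry of a nonempty composable tuple. -/
def split : ∀ {k : ℕ} {z y : V}, DTup D (k + 1) z y → Σ m : V, D.Hom m y × DTup D k z m
  | _, _, _, cons d rest => ⟨_, d, rest⟩

/-- The face `∂^{k+1}`: delete the last (source-end) entry. -/
def dropLast : ∀ {k : ℕ} {z y : V}, DTup D (k + 1) z y → Σ m : V, DTup D k m y
  | 0, _, _, cons _ (nil _) => ⟨_, nil _⟩
  | _ + 1, _, _, cons d rest => ⟨(dropLast rest).1, cons d (dropLast rest).2⟩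

/-- The face `∂^{i+1}` for `i : Fin k`: compose the adjacent entries in positions `i` and
`i+1` counting from the range end. -/
def composeAt : ∀ {k : ℕ} {z y : V}, Fin k → DTup D (k + 1) z y → DTup D k z y
  | _ + 1, _, _, ⟨0, _⟩, cons d₀ (cons d₁ rest) => cons (D.comp d₁ d₀) rest
  | _ + 1, _, _, ⟨i + 1, _⟩, cons d₀ rest => cons d₀ (composeAt ⟨i, by omega⟩ rest)

end DTup

section PathTuples

variable {V : Type u} [Quiver.{v + 1} V]

/-- All entries of a composable tuple of paths have length `≥ 1`. -/
def AllPos : ∀ {q : ℕ} {z m : V}, DTup (pathsCat V) q z m → Prop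
  | _, _, _, DTup.nil _ => True
  | _, _, _, DTup.cons d rest => 1 ≤ Quiver.Path.length d ∧ AllPos rest

theorem allPos_tail {q : ℕ} {z m : V} (α : DTup (pathsCat V) (q + 1) z m)
    (h : AllPos α) : AllPos (DTup.split α).2.2 := by
  cases α with
  | cons d rest => exact h.2

theorem allPos_composeAt : ∀ {q : ℕ} {z m : V} (i : Fin q)
    (α : DTup (pathsCat V) (q + 1) z m), AllPos α → AllPos (DTup.composeAt i α)
  | _ + 1, _, _, ⟨0, _⟩, DTup.cons d₀ (DTup.cons d₁ rest), h => by
      refine ⟨?_, h.2.2⟩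
      have hl : Quiver.Path.length ((pathsCat V).comp d₁ d₀) =
          Quiver.Path.length d₁ + Quiver.Path.length d₀ := Quiver.Path.length_comp d₁ d₀
      have h1 := h.1
      have h2 := h.2.1
      omega
  | _ + 1, _, _, ⟨i + 1, _⟩, DTup.cons d₀ rest, h =>
      ⟨h.1, allPos_composeAt ⟨i, by omega⟩ rest h.2⟩

theorem allPos_dropLast : ∀ {q : ℕ} {z m : V}
    (α : DTup (pathsCat V) (q + 1) z m), AllPos α → AllPos (DTup.dropLast α).2
  | 0, _, _, DTup.cons _ (DTup.nil _), _ => trivial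
  | _ + 1, _, _, DTup.cons d rest, h => ⟨h.1, allPos_dropLast rest h.2⟩

end PathTuples

section Complex

variable {V : Type u} [Quiver.{v + 1} V] {cC : Category.{max u (v + 1)} V}

/-- Generators of `N_q`: tuples `(c; α₁, …, α_q)` where `c` is a composable `p`-tuple of
`𝒞`-morphisms, `(α₁, …, α_q)` is a composable `q`-tuple of paths of length `≥ 1`, and
`source(c_p) = range(α₁)`. -/
abbrev NGen (_M : MatchedPair V cC (pathsCat V)) (p q : ℕ) : Type (max u (v + 1)) :=
  Σ (z m y : V), CTup cC p m y × {α : DTup (pathsCat V) q z m // AllPos α}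

/-- The group `N_q` of nondegenerate vertical chains: the free abelian group on `NGen q`. -/
abbrev NGrp (M : MatchedPair V cC (pathsCat V)) (p q : ℕ) : Type (max u (v + 1)) :=
  NGen M p q →₀ ℤ

variable (M : MatchedPair V cC (pathsCat V)) (p : ℕ)

/-- The face `∂₀(c; α₁, …, α_q) = (c ▷ α₁; α₂, …, α_q)` (using the extended right action). -/
def face0 {q : ℕ} (g : NGen M p (q + 1)) : NGen M p q :=
  match g with
  | ⟨z, _, _, cs, ⟨α, hα⟩⟩ =>
    ⟨z, (DTup.split α).1, (M.raT cs (DTup.split α).2.1).1,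
      (M.raT cs (DTup.split α).2.1).2, ⟨(DTup.split α).2.2, allPos_tail α hα⟩⟩

/-- The face `∂_{i+1}` for `i : Fin q`: compose two adjacent paths. -/
def faceMid {q : ℕ} (i : Fin q) (g : NGen M p (q + 1)) : NGen M p q :=
  match g with
  | ⟨z, m, y, cs, ⟨α, hα⟩⟩ =>
    ⟨z, m, y, cs, ⟨DTup.composeAt i α, allPos_composeAt i α hα⟩⟩

/-- The face `∂_{q+1}`: delete the last path. -/
def faceLast {q : ℕ} (g : NGen M p (q + 1)) : NGen M p q :=
  match g with
  | ⟨_, m, y, cs, ⟨α, hα⟩⟩ =>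
    ⟨(DTup.dropLast α).1, m, y, cs, ⟨(DTup.dropLast α).2, allPos_dropLast α hα⟩⟩

/-- The boundary map `d_{q+1} = Σ_{j=0}^{q+1} (−1)^j ∂_j : N_{q+1} → N_q`. -/
noncomputable def bd (q : ℕ) : NGrp M p (q + 1) →+ NGrp M p q :=
  Finsupp.liftAddHom (fun g => (zmultiplesHom (NGrp M p q))
    (Finsupp.single (face0 M p g) 1
      + (∑ i : Fin q, (-1 : ℤ) ^ ((i : ℕ) + 1) • Finsupp.single (faceMid M p i g) 1)
      + (-1 : ℤ) ^ (q + 1) • Finsupp.single (faceLast M p g) 1))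

/-- Auxiliary sum for the homotopy `s`: given a generator `(c; α₁, …, α_q)` whose first path
has been decomposed as `α₁ = ρ ∘ pa` (`ρ` the range-end part already peeled off), this is
`Σ (c ▷ (α₁^{[0,i−1]}); α₁^i, α₁^{[i,ℓ]}, α₂, …, α_q)` over the remaining decompositions of
`pa` with source-end part of length `≥ 1`. -/
noncomputable def sAux {q : ℕ} {z yc m m₁ : V} (cs : CTup cC p m yc)
    (rest : DTup (pathsCat V) q z m₁) (hrest : AllPos rest) :
    ∀ {w : V}, Quiver.Path w m → Quiver.Path m₁ w → NGrp M p (q + 2)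
  | _, _, Quiver.Path.nil => 0
  | _, ρ, Quiver.Path.cons β e =>
      (if h : 1 ≤ Quiver.Path.length β then
        Finsupp.single
          (⟨z, _, (M.raT cs ρ).1, (M.raT cs ρ).2,
            ⟨DTup.cons (Quiver.Hom.toPath e) (DTup.cons β rest),
              ⟨by simp [Quiver.Hom.toPath], h, hrest⟩⟩⟩ : NGen M p (q + 2)) 1
      else 0)
      + sAux cs rest hrest ((Quiver.Hom.toPath e).comp ρ) β

/-- The value of the homotopy `s_q` on a generator `(c; α₁, …, α_q)` (before negation):
the sum over decompositions `α₁ = α₁^{[0,i−1]} ∘ α₁^i ∘ α₁^{[i,ℓ]}` with `1 ≤ i ≤ ℓ−1`. -/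
noncomputable def sGen {q : ℕ} : NGen M p (q + 1) → NGrp M p (q + 2)
  | ⟨_, _, _, cs, ⟨DTup.cons α₁ rest, hα⟩⟩ => sAux M p cs rest hα.2 Quiver.Path.nil α₁

/-- The homotopy `s_q : N_q → N_{q+1}`. -/
noncomputable def sMap (q : ℕ) : NGrp M p (q + 1) →+ NGrp M p (q + 2) :=
  Finsupp.liftAddHom (fun g => (zmultiplesHom (NGrp M p (q + 2))) (- sGen M p g))

end Complex

namespace MatchedPair

variable {V : Type u} {C D : Category.{v} V} (M : MatchedPair V C D)

private theorem sigma_snoc_congr {k : ℕ} {z m y : V} (rest : CTup C k m y)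
    {w₁ w₂ : V} (hw : w₁ = w₂) {l₁ : D.Hom w₁ m} {l₂ : D.Hom w₂ m} (hl : HEq l₁ l₂)
    {r₁ : C.Hom z w₁} {r₂ : C.Hom z w₂} (hr : HEq r₁ r₂) :
    (⟨(M.raT rest l₁).1, CTup.snoc (M.raT rest l₁).2 r₁⟩ : Σ y', CTup C (k + 1) z y')
      = ⟨(M.raT rest l₂).1, CTup.snoc (M.raT rest l₂).2 r₂⟩ := by
  subst hw
  rw [eq_of_heq hl, eq_of_heq hr]

theorem raT_id : ∀ {k : ℕ} {m y : V} (cs : CTup C k m y), M.raT cs (D.id m) = ⟨y, cs⟩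
  | 0, _, _, CTup.nil _ => rfl
  | _ + 1, _, _, CTup.snoc rest c => by
    rw [raT, sigma_snoc_congr M rest (M.w_id_right c) (M.la_id_right c) (M.ra_id_right c),
      raT_id rest]

theorem raT_comp : ∀ {k : ℕ} {m y : V} (cs : CTup C k m y) {k' z : V}
    (d₁ : D.Hom k' m) (d₂ : D.Hom z k'), M.raT cs (D.comp d₂ d₁) = M.raT (M.raT cs d₁).2 d₂
  | 0, _, _, CTup.nil _, _, _, _, _ => rfl
  | _ + 1, _, _, CTup.snoc rest c, _, _, d₁, d₂ => by
    rw [raT, sigma_snoc_congr M rest (M.w_comp_right c d₁ d₂) (M.la_comp_right c d₁ d₂)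
      (M.ra_comp_right c d₁ d₂), raT_comp rest (M.la c d₁) (M.la (M.ra c d₁) d₂)]
    rfl

end MatchedPair

section Homotopy

variable {V : Type u} [Quiver.{v + 1} V] {cC : Category.{max u (v + 1)} V}
variable (M : MatchedPair V cC (pathsCat V)) {p q : ℕ}

theorem Quiver.Path.one_le_length_cons {a b c : V} (β : Quiver.Path a b) (e : b ⟶ c) :
    1 ≤ (β.cons e).length :=
  Nat.le_add_left 1 β.length

abbrev mkGen {z m₁ m y : V} (cs : CTup cC p m y) (α : Quiver.Path m₁ m) (hα : 1 ≤ α.length)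
    (t : DTup (pathsCat V) q z m₁) (ht : AllPos t) : NGen M p (q + 1) :=
  ⟨z, m, y, cs, ⟨DTup.cons α t, hα, ht⟩⟩

abbrev mkGenEdge {z m₁ m y : V} (cs : CTup cC p m y) (e : m₁ ⟶ m)
    (t : DTup (pathsCat V) q z m₁) (ht : AllPos t) : NGen M p (q + 1) :=
  mkGen M cs e.toPath (Quiver.Path.length_toPath e).ge t ht

abbrev mkGenCons {z m₁ w m y : V} (cs : CTup cC p m y) (β : Quiver.Path m₁ w) (e : w ⟶ m)
    (t : DTup (pathsCat V) q z m₁) (ht : AllPos t) : NGen M p (q + 1) :=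
  mkGen M cs (β.cons e) (β.one_le_length_cons e) t ht

variable {M}

theorem raT_nil {k : ℕ} {m y : V} (cs : CTup cC k m y) :
    M.raT cs Quiver.Path.nil = ⟨y, cs⟩ :=
  M.raT_id cs

theorem bd_single (g : NGen M p (q + 1)) :
    bd M p q (Finsupp.single g 1)
      = Finsupp.single (face0 M p g) 1
        + (∑ i : Fin q, (-1 : ℤ) ^ ((i : ℕ) + 1) • Finsupp.single (faceMid M p i g) 1)
        + (-1 : ℤ) ^ (q + 1) • Finsupp.single (faceLast M p g) 1 := by
  simp [bd]

theorem sMap_single (g : NGen M p (q + 1)) :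
    sMap M p q (Finsupp.single g 1) = - sGen M p g := by
  simp [sMap]

theorem sAux_raT {z y m m₁ w₀ : V} (cs : CTup cC p m y) (ρ : Quiver.Path w₀ m)
    (t : DTup (pathsCat V) q z m₁) (ht : AllPos t) :
    ∀ {w : V} (ρ' : Quiver.Path w w₀) (α : Quiver.Path m₁ w),
      sAux M p (M.raT cs ρ).2 t ht ρ' α = sAux M p cs t ht (ρ'.comp ρ) α
  | _, _, Quiver.Path.nil => rfl
  | _, ρ', Quiver.Path.cons β e => by
    simp only [sAux]
    rw [sAux_raT cs ρ t ht, Quiver.Path.comp_assoc, ← M.raT_comp cs ρ ρ']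
    rfl

theorem sGen_mkGen {z m₁ m y : V} (cs : CTup cC p m y) (α : Quiver.Path m₁ m)
    (hα : 1 ≤ α.length) (t : DTup (pathsCat V) q z m₁) (ht : AllPos t) :
    sGen M p (mkGen M cs α hα t ht) = sAux M p cs t ht Quiver.Path.nil α :=
  rfl

theorem sGen_mkGenEdge {z m₁ m y : V} (cs : CTup cC p m y) (e : m₁ ⟶ m)
    (t : DTup (pathsCat V) q z m₁) (ht : AllPos t) :
    sGen M p (mkGenEdge M cs e t ht) = 0 := by
  simp [sGen_mkGen, Quiver.Hom.toPath, sAux]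

theorem sGen_mkGenCons {z m₁ w m y : V} (cs : CTup cC p m y) (β : Quiver.Path m₁ w)
    (e : w ⟶ m) (hβ : 1 ≤ β.length) (t : DTup (pathsCat V) q z m₁) (ht : AllPos t) :
    sGen M p (mkGenCons M cs β e t ht)
      = Finsupp.single (mkGenEdge M cs e (DTup.cons β t) ⟨hβ, ht⟩) 1
        + sGen M p (mkGen M (M.raT cs e.toPath).2 β hβ t ht) := by
  rw [sGen_mkGen, sGen_mkGen, sAux_raT, Quiver.Path.nil_comp]
  simp only [sAux, dif_pos hβ, Quiver.Path.comp_nil]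
  rw [raT_nil]

section Cons

variable {z m₁ w m y : V} (cs : CTup cC p m y) (β : Quiver.Path m₁ w) (e : w ⟶ m)
  (hβ : 1 ≤ β.length)

theorem face0_mkGenCons (t : DTup (pathsCat V) q z m₁) (ht : AllPos t) :
    face0 M p (mkGenCons M cs β e t ht) = face0 M p (mkGen M (M.raT cs e.toPath).2 β hβ t ht) := by
  show (⟨z, m₁, (M.raT cs ((pathsCat V).comp β e.toPath)).1,
    (M.raT cs ((pathsCat V).comp β e.toPath)).2, ⟨t, ht⟩⟩ : NGen M p q) = _
  rw [M.raT_comp]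
  rfl

variable (t : DTup (pathsCat V) (q + 1) z m₁) (ht : AllPos t)

theorem sGen_faceMid_mkGenCons (i : Fin (q + 1)) :
    sGen M p (faceMid M p i (mkGenCons M cs β e t ht))
      = Finsupp.single (faceMid M p i.succ (mkGenEdge M cs e (DTup.cons β t) ⟨hβ, ht⟩)) 1
        + sGen M p (faceMid M p i (mkGen M (M.raT cs e.toPath).2 β hβ t ht)) := by
  induction i using Fin.cases with
  | zero =>
    cases t with
    | cons α₂ t' =>
      have hβ' : 1 ≤ (α₂.comp β).length := by
        rw [Quiver.Path.length_comp]; exact le_add_left hβ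
      exact sGen_mkGenCons cs (α₂.comp β) e hβ' t' ht.2
  | succ i => exact sGen_mkGenCons cs β e hβ _ (allPos_composeAt i t ht)

theorem sGen_faceLast_mkGenCons :
    sGen M p (faceLast M p (mkGenCons M cs β e t ht))
      = Finsupp.single (faceLast M p (mkGenEdge M cs e (DTup.cons β t) ⟨hβ, ht⟩)) 1
        + sGen M p (faceLast M p (mkGen M (M.raT cs e.toPath).2 β hβ t ht)) :=
  sGen_mkGenCons cs β e hβ _ (allPos_dropLast t ht)

theorem sMap_bd_single_mkGenCons :
    sMap M p q (bd M p (q + 1) (Finsupp.single (mkGenCons M cs β e t ht) 1))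
      = sMap M p q (bd M p (q + 1) (Finsupp.single (mkGen M (M.raT cs e.toPath).2 β hβ t ht) 1))
        + bd M p (q + 2) (Finsupp.single (mkGenEdge M cs e (DTup.cons β t) ⟨hβ, ht⟩) 1)
        + Finsupp.single (mkGenCons M cs β e t ht) 1
        - Finsupp.single (mkGen M (M.raT cs e.toPath).2 β hβ t ht) 1 := by
  have hface0 : face0 M p (mkGenEdge M cs e (DTup.cons β t) ⟨hβ, ht⟩)
      = mkGen M (M.raT cs e.toPath).2 β hβ t ht := rfl
  have hfaceMid0 : faceMid M p 0 (mkGenEdge M cs e (DTup.cons β t) ⟨hβ, ht⟩)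
      = mkGenCons M cs β e t ht := rfl
  rw [bd_single (mkGenEdge M cs e (DTup.cons β t) ⟨hβ, ht⟩), Fin.sum_univ_succ, hface0, hfaceMid0]
  simp only [bd_single, map_add, map_sum, map_zsmul, sMap_single, face0_mkGenCons cs β e hβ,
    sGen_faceMid_mkGenCons cs β e hβ, sGen_faceLast_mkGenCons cs β e hβ]
  simp only [Fin.val_succ, Fin.val_zero, pow_succ, smul_add, smul_neg, neg_add,
    Finset.sum_add_distrib, mul_neg_one, neg_smul, Finset.sum_neg_distrib]
  abel

end Cons

section Generator

variable {z m₂ m₁ : V} (α₂ : Quiver.Path m₂ m₁) (h₂ : 1 ≤ α₂.length)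
  (t : DTup (pathsCat V) q z m₂) (ht : AllPos t)

theorem bd_sMap_add_sMap_bd_single_mkGenEdge {m y : V} (cs : CTup cC p m y) (e : m₁ ⟶ m) :
    bd M p (q + 2) (sMap M p (q + 1)
        (Finsupp.single (mkGenEdge M cs e (DTup.cons α₂ t) ⟨h₂, ht⟩) 1))
      + sMap M p q (bd M p (q + 1)
        (Finsupp.single (mkGenEdge M cs e (DTup.cons α₂ t) ⟨h₂, ht⟩) 1))
      = Finsupp.single (mkGenEdge M cs e (DTup.cons α₂ t) ⟨h₂, ht⟩) 1 := by
  have hmid0 : sGen M p (faceMid M p 0 (mkGenEdge M cs e (DTup.cons α₂ t) ⟨h₂, ht⟩))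
      = Finsupp.single (mkGenEdge M cs e (DTup.cons α₂ t) ⟨h₂, ht⟩) 1
        + sGen M p (face0 M p (mkGenEdge M cs e (DTup.cons α₂ t) ⟨h₂, ht⟩)) :=
    sGen_mkGenCons cs α₂ e h₂ t ht
  have hmid (i : Fin q) :
      sGen M p (faceMid M p i.succ (mkGenEdge M cs e (DTup.cons α₂ t) ⟨h₂, ht⟩)) = 0 :=
    sGen_mkGenEdge cs e _ (allPos_composeAt i (DTup.cons α₂ t) ⟨h₂, ht⟩)
  have hlast : sGen M p (faceLast M p (mkGenEdge M cs e (DTup.cons α₂ t) ⟨h₂, ht⟩)) = 0 :=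
    sGen_mkGenEdge cs e _ (allPos_dropLast (DTup.cons α₂ t) ⟨h₂, ht⟩)
  rw [sMap_single, sGen_mkGenEdge cs e (DTup.cons α₂ t) ⟨h₂, ht⟩, neg_zero, map_zero, zero_add,
    bd_single, Fin.sum_univ_succ]
  simp only [map_add, map_sum, map_zsmul, sMap_single, hmid0, hmid, hlast]
  simp only [neg_zero, smul_zero, Finset.sum_const_zero, add_zero, Fin.val_zero, zero_add, pow_one,
    neg_add, smul_add, smul_neg, neg_one_smul, neg_neg]
  abel

theorem bd_sMap_add_sMap_bd_single_mkGen :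
    ∀ {m y : V} (cs : CTup cC p m y) (α : Quiver.Path m₁ m) (hα : 1 ≤ α.length),
      bd M p (q + 2) (sMap M p (q + 1)
          (Finsupp.single (mkGen M cs α hα (DTup.cons α₂ t) ⟨h₂, ht⟩) 1))
        + sMap M p q (bd M p (q + 1)
          (Finsupp.single (mkGen M cs α hα (DTup.cons α₂ t) ⟨h₂, ht⟩) 1))
        = Finsupp.single (mkGen M cs α hα (DTup.cons α₂ t) ⟨h₂, ht⟩) 1
  | _, _, _, .nil, hα => absurd hα (by simp)
  | _, _, cs, .cons .nil e, _ => bd_sMap_add_sMap_bd_single_mkGenEdge α₂ h₂ t ht cs e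
  | _, _, cs, .cons (.cons γ f) e, _ => by
    have hβ := γ.one_le_length_cons f
    have ih := bd_sMap_add_sMap_bd_single_mkGen (M.raT cs e.toPath).2 (γ.cons f) hβ
    rw [sMap_bd_single_mkGenCons cs (γ.cons f) e hβ (DTup.cons α₂ t) ⟨h₂, ht⟩, sMap_single,
      sGen_mkGenCons cs (γ.cons f) e hβ (DTup.cons α₂ t) ⟨h₂, ht⟩, neg_add, map_add, map_neg,
      ← sMap_single, eq_sub_of_add_eq ih]
    abel

end Generator

end Homotopy

theorem contracting_homotopy_on_nondegenerate_chains_general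
    (V : Type u) [Quiver.{v + 1} V] (cC : Category.{max u (v + 1)} V)
    (M : MatchedPair V cC (pathsCat V))
    (p : ℕ) (r : ℕ) :
    ∀ x : NGrp M p (r + 2),
      bd M p (r + 2) (sMap M p (r + 1) x) + sMap M p r (bd M p (r + 1) x) = x := by
  intro x
  induction x using Finsupp.induction_linear with
  | zero => simp
  | add x y hx hy => rw [map_add, map_add, map_add, map_add, add_add_add_comm, hx, hy]
  | single g n =>
    obtain ⟨z, m, y, cs, ⟨_ | ⟨α, _ | ⟨α₂, t⟩⟩, hα, h₂, ht⟩⟩ := g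
    rw [← Finsupp.smul_single_one, map_zsmul, map_zsmul, map_zsmul, map_zsmul, ← smul_add,
      bd_sMap_add_sMap_bd_single_mkGen α₂ h₂ t ht cs α hα]

/-- **Statement 17.** Let `E` be a directed graph, `𝒟` its path category, and `(𝒞, 𝒟, ◁, ▷)`
a length-preserving matched pair.  Fix `p ≥ 0`.  Then for every `q ≥ 2` (here `q = r + 2`),
the maps `s` and `d` on the nondegenerate vertical chains `N_q` satisfy
`d_{q+1} ∘ s_q + s_{q−1} ∘ d_q = id`. -/
theorem contracting_homotopy_on_nondegenerate_chains
    (V : Type u) [Quiver.{v + 1} V] (cC : Category.{max u (v + 1)} V)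
    (M : MatchedPair V cC (pathsCat V))
    -- the matched pair is length-preserving:
    (hlen : ∀ {z m y : V} (c : cC.Hom m y) (α : Quiver.Path z m),
      Quiver.Path.length (M.la c α) = Quiver.Path.length α)
    (p : ℕ) (r : ℕ) :
    ∀ x : NGrp M p (r + 2),
      bd M p (r + 2) (sMap M p (r + 1) x) + sMap M p r (bd M p (r + 1) x) = x :=
  contracting_homotopy_on_nondegenerate_chains_general V cC M p r
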